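/- arXiv:2311.17798 — 8 statements merged into one kernel-verified Lean document; each statement's English description precedes it below -/
import Mathlib

section
/- Let P be an n×n complex matrix with P² = 1 (the identity matrix), and for θ ∈ ℝ set U(θ) := exp(−(i·θ/2)·P). Then for every n×n complex matrix ρ and every θ ∈ ℝ: U(θ + π/2) * ρ * U(θ + π/2)⁻¹ − U(θ − π/2) * ρ * U(θ − π/2)⁻¹ = −i · (U(θ) * (P*ρ − ρ*P) * U(θ)⁻¹). Consequently, for every n×n complex matrix Π, writing f(θ) := Tr(Π * U(θ) * ρ * U(θ)⁻¹), one has f(θ + π/2) − f(θ − π/2) = −i · Tr(Π * U(θ) * (P*ρ − ρ*P) * U(θ)⁻¹). -/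
open Matrix NormedSpace

lemma exp_smul_I_of_sq_one {n : ℕ} (P : Matrix (Fin n) (Fin n) ℂ) (hP : P * P = 1) (x : ℂ) :
    exp ((x * Complex.I) • P) =
      Complex.cos x • (1 : Matrix (Fin n) (Fin n) ℂ) + (Complex.sin x * Complex.I) • P := by
  have hs : HasSum (fun k : ℕ => ((Nat.factorial k : ℂ))⁻¹ • ((x * Complex.I) • P) ^ k)
      (Complex.cos x • (1 : Matrix (Fin n) (Fin n) ℂ) + (Complex.sin x * Complex.I) • P) := by
    refine HasSum.even_add_odd ?_ ?_
    · have h := (Complex.hasSum_cos x).smul_const (1 : Matrix (Fin n) (Fin n) ℂ)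
      convert h using 2 with k
      rw [smul_pow, mul_pow, pow_mul P, sq, hP, one_pow, smul_smul, pow_mul Complex.I,
        Complex.I_sq]
      congr 1
      field_simp
    · have h := ((Complex.hasSum_sin x).mul_right Complex.I).smul_const P
      convert h using 2 with k
      rw [smul_pow, mul_pow, pow_succ P, pow_mul P, sq, hP, one_pow, one_mul, smul_smul,
        pow_succ Complex.I, pow_mul Complex.I, Complex.I_sq]
      congr 1
      field_simp
  rw [exp_eq_tsum ℂ]
  exact hs.tsum_eq

/-- The parameter-shift rule identity. For an involutory generator `P` (`P² = 1`) and
`U θ := exp(-(iθ/2)P)`, the shifted conjugations satisfy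
`U(θ+π/2) ρ U(θ+π/2)⁻¹ - U(θ-π/2) ρ U(θ-π/2)⁻¹ = -i · U(θ) [P, ρ] U(θ)⁻¹`, and hence
for every observable `Pr` the function `f θ := Tr(Pr U(θ) ρ U(θ)⁻¹)` satisfies
`f(θ+π/2) - f(θ-π/2) = -i · Tr(Pr U(θ) [P, ρ] U(θ)⁻¹)`. -/
theorem parameter_shift_rule {n : ℕ} (P : Matrix (Fin n) (Fin n) ℂ)
    (hP : P * P = 1)
    (U : ℝ → Matrix (Fin n) (Fin n) ℂ)
    (hU : ∀ θ : ℝ, U θ = exp ((-(Complex.I * θ / 2)) • P))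
    (ρ : Matrix (Fin n) (Fin n) ℂ) (θ : ℝ) :
    (U (θ + Real.pi / 2) * ρ * (U (θ + Real.pi / 2))⁻¹ -
        U (θ - Real.pi / 2) * ρ * (U (θ - Real.pi / 2))⁻¹ =
      (-Complex.I) • (U θ * (P * ρ - ρ * P) * (U θ)⁻¹)) ∧
    ∀ Pr : Matrix (Fin n) (Fin n) ℂ,
      Matrix.trace (Pr * (U (θ + Real.pi / 2) * ρ * (U (θ + Real.pi / 2))⁻¹)) -
          Matrix.trace (Pr * (U (θ - Real.pi / 2) * ρ * (U (θ - Real.pi / 2))⁻¹)) =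
        -Complex.I * Matrix.trace (Pr * (U θ * (P * ρ - ρ * P) * (U θ)⁻¹)) := by
  have hmul : ∀ a b : ℝ, U (a + b) = U a * U b := by
    intro a b
    rw [hU, hU, hU, ← Matrix.exp_add_of_commute]
    · congr 1
      rw [← add_smul]
      congr 1
      push_cast
      ring
    · exact ((Commute.refl P).smul_right _).smul_left _
  set c : ℂ := ((Real.sqrt 2 / 2 : ℝ) : ℂ) with hc
  have hc2 : c * c = 1 / 2 := by
    rw [hc]
    norm_cast
    rw [div_mul_div_comm, Real.mul_self_sqrt (by norm_num)]
    norm_num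
  have hexp : ∀ t : ℝ, U t = Complex.cos ((-(t / 2) : ℝ) : ℂ) • (1 : Matrix (Fin n) (Fin n) ℂ) +
      (Complex.sin ((-(t / 2) : ℝ) : ℂ) * Complex.I) • P := by
    intro t
    rw [hU]
    rw [show (-(Complex.I * t / 2)) = ((-(t / 2) : ℝ) : ℂ) * Complex.I by push_cast; ring]
    exact exp_smul_I_of_sq_one P hP _
  have hA : U (Real.pi / 2) = c • (1 : Matrix (Fin n) (Fin n) ℂ) - (c * Complex.I) • P := by
    rw [hexp]
    rw [show (-(Real.pi / 2 / 2)) = -(Real.pi / 4) by ring]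
    rw [← Complex.ofReal_cos, ← Complex.ofReal_sin, Real.cos_neg, Real.sin_neg,
      Real.cos_pi_div_four, Real.sin_pi_div_four]
    rw [Complex.ofReal_neg, neg_mul, neg_smul, ← sub_eq_add_neg]
  have hB : U (-(Real.pi / 2)) = c • (1 : Matrix (Fin n) (Fin n) ℂ) + (c * Complex.I) • P := by
    rw [hexp]
    rw [show (-(-(Real.pi / 2) / 2)) = (Real.pi / 4) by ring]
    rw [← Complex.ofReal_cos, ← Complex.ofReal_sin,
      Real.cos_pi_div_four, Real.sin_pi_div_four]
  set A := U (Real.pi / 2) with hAdef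
  set B := U (-(Real.pi / 2)) with hBdef
  have hAB : A * B = 1 := by
    rw [hA, hB]
    simp only [sub_mul, mul_add, smul_mul_assoc, mul_smul_comm, one_mul, mul_one,
      smul_smul, hP]
    match_scalars
    · linear_combination (1 - Complex.I * Complex.I) * hc2 - (1/2) * Complex.I_mul_I
    · ring
  have hBA : B * A = 1 := mul_eq_one_comm.mp hAB
  have hAinv : A⁻¹ = B := Matrix.inv_eq_right_inv hAB
  have hBinv : B⁻¹ = A := Matrix.inv_eq_right_inv hBA
  have hkey : A * ρ * B - B * ρ * A = (-Complex.I) • (P * ρ - ρ * P) := by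
    rw [hA, hB]
    simp only [sub_mul, mul_sub, mul_add, add_mul, smul_mul_assoc, mul_smul_comm,
      one_mul, mul_one, smul_smul, smul_sub]
    match_scalars <;>
      first
        | linear_combination (-2 * Complex.I) * hc2 - (1 : ℂ) * Complex.I_mul_I
        | linear_combination (2 * Complex.I) * hc2 + (1 : ℂ) * Complex.I_mul_I
        | linear_combination (1 : ℂ) * Complex.I_mul_I
        | linear_combination (-1 : ℂ) * Complex.I_mul_I
        | linear_combination (4 * Complex.I) * hc2 + (1 : ℂ) * Complex.I_mul_I
        | linear_combination (-4 * Complex.I) * hc2 - (1 : ℂ) * Complex.I_mul_I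
        | linear_combination (2 * Complex.I) * hc2
        | linear_combination (-2 * Complex.I) * hc2
        | ring
  have hUp : U (θ + Real.pi / 2) = U θ * A := hmul θ (Real.pi / 2)
  have hUm : U (θ - Real.pi / 2) = U θ * B := by
    rw [show θ - Real.pi / 2 = θ + (-(Real.pi / 2)) by ring, hmul]
  have hmain : U (θ + Real.pi / 2) * ρ * (U (θ + Real.pi / 2))⁻¹ -
      U (θ - Real.pi / 2) * ρ * (U (θ - Real.pi / 2))⁻¹ =
      (-Complex.I) • (U θ * (P * ρ - ρ * P) * (U θ)⁻¹) := by
    rw [hUp, hUm, Matrix.mul_inv_rev, Matrix.mul_inv_rev, hAinv, hBinv]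
    have e1 : U θ * A * ρ * (B * (U θ)⁻¹) = U θ * (A * ρ * B) * (U θ)⁻¹ := by
      simp only [Matrix.mul_assoc]
    have e2 : U θ * B * ρ * (A * (U θ)⁻¹) = U θ * (B * ρ * A) * (U θ)⁻¹ := by
      simp only [Matrix.mul_assoc]
    rw [e1, e2, ← sub_mul, ← Matrix.mul_sub, hkey, mul_smul_comm, smul_mul_assoc]
  refine ⟨hmain, fun Pr => ?_⟩
  rw [← Matrix.trace_sub, ← mul_sub, hmain, mul_smul_comm, Matrix.trace_smul, smul_eq_mul]
end

section
/- Let Z := !![1, 0; 0, −1] and Y := !![0, −i; i, 0] be the Pauli matrices in Matrix (Fin 2) (Fin 2) ℂ, and let Z ⊗ Y denote their Kronecker product. Then for every θ ∈ ℝ, exp(−(i·θ/2)·(Z ⊗ Y)) equals the 4×4 matrix with rows (cos(θ/2), −sin(θ/2), 0, 0), (sin(θ/2), cos(θ/2), 0, 0), (0, 0, cos(θ/2), sin(θ/2)), (0, 0, −sin(θ/2), cos(θ/2)). -/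
open Matrix NormedSpace Kronecker

lemma exp_smul_of_sq_eq_one {A : Type*} [NormedRing A] [NormedAlgebra ℂ A]
    [CompleteSpace A] (a : A) (h : a * a = 1) (θ : ℝ) :
    exp ((-(Complex.I * θ / 2)) • a) =
      (Real.cos (θ / 2) : ℂ) • (1 : A) + (-(Complex.I * Real.sin (θ / 2))) • a := by
  have ha : ∀ n : ℕ, a ^ (2 * n) = 1 := fun n => by
    rw [pow_mul, sq, h, one_pow]
  have hz2 : ∀ n : ℕ, (-(Complex.I * θ / 2)) ^ (2 * n) = (-1) ^ n * ((θ : ℂ) / 2) ^ (2 * n) := by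
    intro n
    rw [pow_mul, pow_mul, show (-(Complex.I * (θ : ℂ) / 2)) ^ 2 = -(((θ : ℂ) / 2) ^ 2) by
      rw [show -(Complex.I * (θ : ℂ) / 2) = Complex.I * (-((θ : ℂ) / 2)) by ring, mul_pow,
        Complex.I_sq]; ring]
    rw [neg_pow]
  rw [exp_eq_tsum ℂ]
  refine HasSum.tsum_eq ?_
  refine HasSum.even_add_odd ?_ ?_
  · have key : ∀ n : ℕ, ((((2 * n).factorial : ℂ))⁻¹ : ℂ) • ((-(Complex.I * θ / 2)) • a) ^ (2 * n)
        = ((-1) ^ n * ((θ : ℂ) / 2) ^ (2 * n) / ((2 * n).factorial : ℂ)) • (1 : A) := by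
      intro n
      rw [smul_pow, ha, smul_smul, hz2]
      congr 1
      ring
    simp only [key]
    have := (Complex.hasSum_cos ((θ : ℂ) / 2)).smul_const (1 : A)
    rwa [show Complex.cos ((θ : ℂ) / 2) = ((Real.cos (θ / 2) : ℝ) : ℂ) by
      rw [Complex.ofReal_cos]; push_cast; ring_nf] at this
  · have key : ∀ n : ℕ, ((((2 * n + 1).factorial : ℂ))⁻¹ : ℂ) • ((-(Complex.I * θ / 2)) • a) ^ (2 * n + 1)
        = (-Complex.I * ((-1) ^ n * ((θ : ℂ) / 2) ^ (2 * n + 1) / ((2 * n + 1).factorial : ℂ))) • a := by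
      intro n
      rw [smul_pow, show a ^ (2 * n + 1) = a by rw [pow_succ, ha, one_mul], smul_smul, pow_succ, hz2]
      congr 1
      ring
    simp only [key]
    have := ((Complex.hasSum_sin ((θ : ℂ) / 2)).mul_left (-Complex.I)).smul_const a
    rwa [show -Complex.I * Complex.sin ((θ : ℂ) / 2) = -(Complex.I * ((Real.sin (θ / 2) : ℝ) : ℂ)) by
      rw [Complex.ofReal_sin]; push_cast; ring_nf] at this

/-- Explicit form of the two-qubit rotation `e^{-iθ Z⊗Y/2}` from the paper's SO(4)
operator pool. Here the Kronecker-product index `Fin 2 × Fin 2` is identified with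
`Fin 4` via the row-major equivalence `(i, k) ↦ 2i + k`. -/
theorem exp_ZY_rotation (θ : ℝ) :
    Matrix.reindex finProdFinEquiv finProdFinEquiv
        (exp ((-(Complex.I * θ / 2)) •
          ((!![1, 0; 0, -1] : Matrix (Fin 2) (Fin 2) ℂ) ⊗ₖ
            (!![0, -Complex.I; Complex.I, 0] : Matrix (Fin 2) (Fin 2) ℂ)))) =
      !![(Real.cos (θ / 2) : ℂ), -(Real.sin (θ / 2) : ℂ), 0, 0;
         (Real.sin (θ / 2) : ℂ), (Real.cos (θ / 2) : ℂ), 0, 0;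
         0, 0, (Real.cos (θ / 2) : ℂ), (Real.sin (θ / 2) : ℂ);
         0, 0, -(Real.sin (θ / 2) : ℂ), (Real.cos (θ / 2) : ℂ)] := by
  letI : SeminormedRing (Matrix (Fin 2 × Fin 2) (Fin 2 × Fin 2) ℂ) := Matrix.linftyOpSemiNormedRing
  letI : NormedRing (Matrix (Fin 2 × Fin 2) (Fin 2 × Fin 2) ℂ) := Matrix.linftyOpNormedRing
  letI : NormedAlgebra ℂ (Matrix (Fin 2 × Fin 2) (Fin 2 × Fin 2) ℂ) := Matrix.linftyOpNormedAlgebra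
  have hsq : ((!![1, 0; 0, -1] : Matrix (Fin 2) (Fin 2) ℂ) ⊗ₖ
      (!![0, -Complex.I; Complex.I, 0] : Matrix (Fin 2) (Fin 2) ℂ)) *
      ((!![1, 0; 0, -1] : Matrix (Fin 2) (Fin 2) ℂ) ⊗ₖ
      (!![0, -Complex.I; Complex.I, 0] : Matrix (Fin 2) (Fin 2) ℂ)) = 1 := by
    rw [← Matrix.mul_kronecker_mul]
    have h1 : (!![1, 0; 0, -1] : Matrix (Fin 2) (Fin 2) ℂ) * !![1, 0; 0, -1] = 1 := by
      rw [Matrix.one_fin_two]; norm_num [Matrix.mul_fin_two]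
    have h2 : (!![0, -Complex.I; Complex.I, 0] : Matrix (Fin 2) (Fin 2) ℂ) *
        !![0, -Complex.I; Complex.I, 0] = 1 := by
      rw [Matrix.one_fin_two]; norm_num [Matrix.mul_fin_two, Complex.I_mul_I]
    rw [h1, h2, Matrix.one_kronecker_one]
  erw [exp_smul_of_sq_eq_one _ hsq θ]
  ext i j
  fin_cases i <;> fin_cases j <;>
    simp [Matrix.reindex_apply, Matrix.submatrix_apply, Matrix.one_apply, finProdFinEquiv,
      kroneckerMap_apply, Matrix.add_apply, Matrix.smul_apply, Fin.divNat, Fin.modNat,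
      Prod.ext_iff, Fin.ext_iff, Complex.I_sq, vecHead, vecTail,
      show ((3 : Fin 4) : ℕ) = 3 from rfl, show ((2 : Fin 4) : ℕ) = 2 from rfl] <;>
    ring_nf <;> simp [Complex.I_sq]
end

section
/- For each matrix P in the set {Z⊗Y, Y⊗1, X⊗Y, 1⊗Y, Y⊗Z, Y⊗X} of 4×4 Kronecker products of Pauli matrices: (a) the matrix −i·P has all real entries and is antisymmetric, i.e. (−i·P)ᵀ = −(−i·P); and (b) for every θ ∈ ℝ, the matrix exp(−(i·θ/2)·P) has all real entries, is orthogonal (its transpose is its inverse), and has determinant 1. -/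
open Matrix NormedSpace Kronecker

attribute [local instance] Matrix.linftyOpSemiNormedRing Matrix.linftyOpNormedRing
  Matrix.linftyOpNormedAlgebra

variable {n : Type*} [Fintype n] [DecidableEq n]

lemma exp_map_ofReal (B : Matrix n n ℝ) :
    exp (B.map Complex.ofReal) = (exp B).map Complex.ofReal := by
  exact (map_exp (Complex.ofRealHom.mapMatrix (m := n))
    (Continuous.matrix_map continuous_id Complex.continuous_ofReal) B).symm

lemma det_exp_eq_one (B : Matrix n n ℝ) (hB : Bᵀ = -B) : (exp B).det = 1 := by
  set g : ℝ → ℝ := fun t => (exp (t • B)).det with hg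
  have hcont : Continuous g := Continuous.matrix_det (by
    exact NormedSpace.exp_continuous.comp (continuous_id.smul continuous_const))
  have hsq : ∀ t, g t * g t = 1 := by
    intro t
    have h1 : (exp (t • B))ᵀ = exp (-(t • B)) := by
      rw [← Matrix.exp_transpose, transpose_smul, hB, smul_neg]
    have h2 : exp (-(t • B)) * exp (t • B) = 1 := by
      rw [← Matrix.exp_add_of_commute _ _ ((Commute.refl (t • B)).neg_left),
        neg_add_cancel, exp_zero]
    calc g t * g t = ((exp (t • B))ᵀ * exp (t • B)).det := by
          rw [Matrix.det_mul, Matrix.det_transpose]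
      _ = 1 := by rw [h1, h2, Matrix.det_one]
  have hg0 : g 0 = 1 := by simp [hg, exp_zero]
  have hall : ∀ t, g t = 1 := by
    intro t
    rcases mul_self_eq_one_iff.mp (hsq t) with h | h
    · exact h
    · exfalso
      have h0 : (0 : ℝ) ∈ Set.uIcc (g 0) (g t) := by
        rw [hg0, h]
        simp [Set.uIcc_of_ge]
      obtain ⟨c, -, hc⟩ := intermediate_value_uIcc hcont.continuousOn h0
      have := hsq c
      rw [hc] at this
      norm_num at this
  simpa [hg] using hall 1

lemma key (P : Matrix (Fin 2 × Fin 2) (Fin 2 × Fin 2) ℂ)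
    (him : ∀ i j, (((-Complex.I) • P) i j).im = 0)
    (hanti : ((-Complex.I) • P)ᵀ = -((-Complex.I) • P)) (θ : ℝ) :
    (∀ i j, ((exp ((-(Complex.I * θ / 2)) • P)) i j).im = 0) ∧
    (exp ((-(Complex.I * θ / 2)) • P))ᵀ * exp ((-(Complex.I * θ / 2)) • P) = 1 ∧
    (exp ((-(Complex.I * θ / 2)) • P)).det = 1 := by
  set B : Matrix (Fin 2 × Fin 2) (Fin 2 × Fin 2) ℝ :=
    Matrix.of fun i j => (θ / 2) * (((-Complex.I) • P) i j).re with hBdef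
  have hentry : ∀ i j, ((-Complex.I) • P) i j =
      Complex.ofReal ((((-Complex.I) • P) i j).re) := by
    intro i j
    exact Complex.ext (by simp) (by simpa using him i j)
  have hmap : (-(Complex.I * θ / 2)) • P = B.map Complex.ofReal := by
    ext i j
    have h1 : ((-(Complex.I * θ / 2)) • P) i j
        = ((θ : ℂ) / 2) * (((-Complex.I) • P) i j) := by
      simp [Matrix.smul_apply]; ring
    rw [h1, hentry i j]
    simp only [hBdef, Matrix.map_apply, Matrix.of_apply, Complex.ofReal_mul,
      Complex.ofReal_div, Complex.ofReal_ofNat]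
  have hBanti : Bᵀ = -B := by
    ext i j
    have h := congrFun (congrFun hanti i) j
    simp only [Matrix.transpose_apply, Matrix.neg_apply] at h
    simp only [hBdef, Matrix.transpose_apply, Matrix.neg_apply, Matrix.of_apply, h,
      Complex.neg_re]
    ring
  have hAanti : ((-(Complex.I * θ / 2)) • P)ᵀ = -((-(Complex.I * θ / 2)) • P) := by
    rw [hmap, ← Matrix.transpose_map, hBanti]
    ext i j
    simp [Matrix.map_apply]
  refine ⟨?_, ?_, ?_⟩
  · intro i j
    rw [hmap, exp_map_ofReal]
    simp [Matrix.map_apply]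
  · rw [← Matrix.exp_transpose, hAanti,
      ← Matrix.exp_add_of_commute _ _ ((Commute.refl ((-(Complex.I * θ / 2)) • P)).neg_left),
      neg_add_cancel, exp_zero]
  · rw [hmap, exp_map_ofReal,
      show ((exp B).map Complex.ofReal) = Complex.ofRealHom.mapMatrix (exp B) from rfl,
      ← RingHom.map_det Complex.ofRealHom, det_exp_eq_one B hBanti]
    simp

/-- The paper's SO(4) operator pool. For each generator
`P ∈ {Z⊗Y, Y⊗1, X⊗Y, 1⊗Y, Y⊗Z, Y⊗X}`:
(a) `-i·P` has real entries and is antisymmetric, and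
(b) for every `θ ∈ ℝ`, the rotation `exp(-(iθ/2)P)` has real entries, is orthogonal
(its transpose is its inverse), and has determinant `1` — i.e. it lies in SO(4). -/
theorem so4_operator_pool
    (X Y Z : Matrix (Fin 2) (Fin 2) ℂ)
    (hX : X = !![0, 1; 1, 0]) (hY : Y = !![0, -Complex.I; Complex.I, 0])
    (hZ : Z = !![1, 0; 0, -1]) :
    ∀ P ∈ ({Z ⊗ₖ Y, Y ⊗ₖ 1, X ⊗ₖ Y, 1 ⊗ₖ Y, Y ⊗ₖ Z, Y ⊗ₖ X} :
        Set (Matrix (Fin 2 × Fin 2) (Fin 2 × Fin 2) ℂ)),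
      ((∀ i j, (((-Complex.I) • P) i j).im = 0) ∧
        ((-Complex.I) • P)ᵀ = -((-Complex.I) • P)) ∧
      ∀ θ : ℝ,
        (∀ i j, ((exp ((-(Complex.I * θ / 2)) • P)) i j).im = 0) ∧
        (exp ((-(Complex.I * θ / 2)) • P))ᵀ * exp ((-(Complex.I * θ / 2)) • P) = 1 ∧
        (exp ((-(Complex.I * θ / 2)) • P)).det = 1 := by
  subst hX hY hZ
  intro P hP
  simp only [Set.mem_insert_iff, Set.mem_singleton_iff] at hP
  have main : (∀ i j, (((-Complex.I) • P) i j).im = 0) ∧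
      ((-Complex.I) • P)ᵀ = -((-Complex.I) • P) := by
    rcases hP with h | h | h | h | h | h <;> subst h <;>
      refine ⟨fun i j => ?_, ?_⟩ <;>
      [skip; (ext i j); skip; (ext i j); skip; (ext i j); skip; (ext i j); skip; (ext i j);
        skip; (ext i j)] <;>
      fin_cases i <;> fin_cases j <;>
      simp [Matrix.kroneckerMap_apply, Matrix.smul_apply, Matrix.one_apply,
        Matrix.transpose_apply, Matrix.neg_apply, Complex.ext_iff]
  exact ⟨main, fun θ => key P main.1 main.2 θ⟩
end

section
/- Let H and H′ be Hermitian n×n complex matrices and t ∈ ℝ. Then ‖exp(i·t·H) − exp(i·t·H′)‖ ≤ |t| · ‖H − H′‖, where ‖·‖ is the spectral norm (the operator norm induced by the Euclidean ℓ² norm on ℂⁿ). -/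
open Matrix NormedSpace
open scoped Matrix.Norms.L2Operator

private lemma exp_skew_norm_eq_one {n : ℕ} (hn : n ≠ 0) (H : Matrix (Fin n) (Fin n) ℂ)
    (hH : H.IsHermitian) (c : ℝ) : ‖exp ((Complex.I * c) • H)‖ = 1 := by
  have : Nontrivial (Matrix (Fin n) (Fin n) ℂ) := by
    have : NeZero n := ⟨hn⟩
    infer_instance
  have hskew : (Complex.I * c) • H ∈ skewAdjoint (Matrix (Fin n) (Fin n) ℂ) := by
    rw [skewAdjoint.mem_iff, star_smul, Matrix.star_eq_conjTranspose, hH, ← neg_smul]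
    congr 1
    simp [Complex.ext_iff]
  letI : NormedAlgebra ℚ (Matrix (Fin n) (Fin n) ℂ) := NormedAlgebra.restrictScalars ℚ ℂ _
  exact CStarRing.norm_coe_unitary ⟨_, exp_mem_unitary_of_mem_skewAdjoint hskew⟩

private lemma smul_collapse {n : ℕ} (H : Matrix (Fin n) (Fin n) ℂ) (r c : ℝ) :
    r • ((Complex.I * c) • H) = (Complex.I * (r * c : ℝ)) • H := by
  rw [← algebraMap_smul ℂ r, smul_smul]
  congr 1
  rw [Complex.coe_algebraMap]
  push_cast
  ring

/-- Perturbation bound for time-evolution operators (Lemma 50 of Chakraborty et al.):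
for Hermitian `H`, `H'` and `t ∈ ℝ`,
`‖exp(itH) - exp(itH')‖ ≤ |t| · ‖H - H'‖` in spectral norm. -/
theorem time_evolution_perturbation_bound {n : ℕ}
    (H H' : Matrix (Fin n) (Fin n) ℂ)
    (hH : H.IsHermitian) (hH' : H'.IsHermitian) (t : ℝ) :
    ‖exp ((Complex.I * t) • H) - exp ((Complex.I * t) • H')‖ ≤ |t| * ‖H - H'‖ := by
  rcases eq_or_ne n 0 with hn | hn
  · subst hn
    have : exp ((Complex.I * t) • H) = exp ((Complex.I * t) • H') :=
      Subsingleton.elim _ _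
    rw [this, sub_self, norm_zero]
    positivity
  set A : Matrix (Fin n) (Fin n) ℂ := (Complex.I * t) • H with hA
  set B : Matrix (Fin n) (Fin n) ℂ := (Complex.I * t) • H' with hB
  set C : ℝ := |t| * ‖H - H'‖ with hC
  have hexp : ∀ (x : Matrix (Fin n) (Fin n) ℂ) (s : ℝ),
      HasDerivAt (fun u : ℝ => exp (u • x)) (exp (s • x) * x) s := by
    intro x s
    have := hasDerivAt_exp_smul_const (𝕂 := ℝ) x s
    exact this
  set F : ℝ → Matrix (Fin n) (Fin n) ℂ := fun s => exp ((1 - s) • A) * exp (s • B)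
    with hF
  have h1 : ∀ s : ℝ, HasDerivAt (fun u : ℝ => exp ((1 - u) • A))
      (-(exp ((1 - s) • A) * A)) s := by
    intro s
    have hg : HasDerivAt (fun u : ℝ => 1 - u) (-1) s := (hasDerivAt_id s).const_sub 1
    have := (hexp A (1 - s)).scomp s hg
    simp only [neg_smul, one_smul, Function.comp_def] at this
    exact this
  have hFd : ∀ s : ℝ, HasDerivAt F (exp ((1 - s) • A) * ((B - A) * exp (s • B))) s := by
    intro s
    have := (h1 s).mul (hexp B s)
    refine HasDerivAt.congr_deriv this ?_
    have hc : exp (s • B) * B = B * exp (s • B) :=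
      (((Commute.refl B).smul_left s).exp_left).eq
    rw [sub_mul, mul_sub, ← hc]
    noncomm_ring
  have hnA : ∀ s : ℝ, ‖exp ((1 - s) • A)‖ = 1 := by
    intro s
    rw [hA, smul_collapse]
    exact exp_skew_norm_eq_one hn H hH _
  have hnB : ∀ s : ℝ, ‖exp (s • B)‖ = 1 := by
    intro s
    rw [hB, smul_collapse]
    exact exp_skew_norm_eq_one hn H' hH' _
  have hBA : ‖B - A‖ = C := by
    rw [hA, hB, ← smul_sub, norm_smul, hC, norm_sub_rev]
    congr 1
    simp [Complex.norm_real, abs_eq_self.mpr]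
  have key : ‖F 1 - F 0‖ ≤ C * ‖(1 : ℝ) - 0‖ := by
    apply (convex_Icc (0:ℝ) 1).norm_image_sub_le_of_norm_hasDerivWithin_le
      (f' := fun s => exp ((1 - s) • A) * ((B - A) * exp (s • B)))
      (fun s _ => (hFd s).hasDerivWithinAt) _ (Set.left_mem_Icc.2 zero_le_one)
      (Set.right_mem_Icc.2 zero_le_one)
    intro s _
    calc ‖exp ((1 - s) • A) * ((B - A) * exp (s • B))‖
        ≤ ‖exp ((1 - s) • A)‖ * ‖(B - A) * exp (s • B)‖ := norm_mul_le _ _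
      _ ≤ ‖exp ((1 - s) • A)‖ * (‖B - A‖ * ‖exp (s • B)‖) := by
          gcongr; exact norm_mul_le _ _
      _ = C := by rw [hnA, hnB, hBA, one_mul, mul_one]
  have hF0 : F 0 = exp A := by simp [hF, exp_zero]
  have hF1 : F 1 = exp B := by simp [hF, exp_zero]
  rw [← hF0, ← hF1, norm_sub_rev]
  simpa using key
end

section
/- Let p, q : Fin d → ℝ be probability vectors with q j > 0 for all j, let δ ≥ 0 satisfy ∑ j, p j * Real.log (p j / q j) ≤ δ, let V : Fin d → Matrix (Fin n) (Fin n) ℂ be unitary matrices, let α ≥ 0 and t ≥ 0. Define H := α • ∑ j, (p j) • V j and H′ := ∑ j, (q j) • V j, and assume H and H′ are Hermitian. Then ‖exp(i·t·H) − exp(i·(α·t)·H′)‖ ≤ Real.sqrt (2·δ) · α · t, where ‖·‖ is the spectral norm (the operator norm induced by the Euclidean ℓ² norm on ℂⁿ). -/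
open Matrix NormedSpace
open scoped Matrix.Norms.L2Operator

/-! ### Scalar lemmas: a sharpened Pinsker inequality -/

private lemma phi_hasDeriv (x : ℝ) (hx : 0 < x) :
    HasDerivAt (fun y : ℝ => Real.log y - 2*(y-1)/(y+1))
      (1/x - 4/(x+1)^2) x := by
  have h1 : HasDerivAt Real.log x⁻¹ x := Real.hasDerivAt_log hx.ne'
  have h2 : HasDerivAt (fun y : ℝ => 2*(y-1)) 2 x := by
    simpa using ((hasDerivAt_id x).sub_const 1).const_mul 2
  have h3 : HasDerivAt (fun y : ℝ => y+1) 1 x := (hasDerivAt_id x).add_const 1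
  have hne : x + 1 ≠ 0 := by linarith
  have h4 := h2.div h3 hne
  have := h1.sub h4
  refine this.congr_deriv ?_
  rw [one_div]
  congr 1
  rw [div_eq_div_iff (pow_ne_zero 2 hne) (pow_ne_zero 2 hne)]
  ring

private lemma phi_mono :
    MonotoneOn (fun y : ℝ => Real.log y - 2*(y-1)/(y+1)) (Set.Ioi 0) := by
  have hder : ∀ x ∈ Set.Ioi (0:ℝ), HasDerivAt (fun y : ℝ => Real.log y - 2*(y-1)/(y+1))
      (1/x - 4/(x+1)^2) x := fun x hx => phi_hasDeriv x hx
  apply monotoneOn_of_deriv_nonneg (convex_Ioi 0)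
  · exact ContinuousOn.sub (Real.continuousOn_log.mono (by intro x hx; exact ne_of_gt hx))
      (ContinuousOn.div (by fun_prop) (by fun_prop)
        (fun x hx => by simp at hx; intro h; linarith))
  · rw [interior_Ioi]
    exact fun x hx => (hder x hx).differentiableAt.differentiableWithinAt
  · intro x hx
    rw [interior_Ioi] at hx
    rw [(hder x hx).deriv]
    have hx0 : (0:ℝ) < x := hx
    rw [sub_nonneg, div_le_div_iff₀ (by positivity) hx0]
    nlinarith [sq_nonneg (x-1)]

private lemma log_ge_of_one_le {x : ℝ} (hx : 1 ≤ x) : 2*(x-1)/(x+1) ≤ Real.log x := by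
  have := phi_mono (Set.mem_Ioi.mpr one_pos) (Set.mem_Ioi.mpr (lt_of_lt_of_le one_pos hx)) hx
  simp at this
  linarith [this]

private lemma log_le_of_le_one {x : ℝ} (hx0 : 0 < x) (hx : x ≤ 1) :
    Real.log x ≤ 2*(x-1)/(x+1) := by
  have := phi_mono (Set.mem_Ioi.mpr hx0) (Set.mem_Ioi.mpr one_pos) hx
  simp at this
  linarith [this]

private noncomputable def gfun (x : ℝ) : ℝ :=
  x * Real.log x - x + 1 - 3*(x-1)^2/(2*(x+2))

private lemma gfun_hasDeriv (x : ℝ) (hx : 0 < x) :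
    HasDerivAt gfun (Real.log x - 3*(x-1)*(x+5)/(2*(x+2)^2)) x := by
  have hne : 2*(x+2) ≠ 0 := by positivity
  have h1 : HasDerivAt (fun y : ℝ => y * Real.log y) (Real.log x + 1) x := by
    have := (hasDerivAt_id x).mul (Real.hasDerivAt_log hx.ne')
    refine this.congr_deriv ?_
    field_simp
    simp only [id_eq]
    ring
  have h2 : HasDerivAt (fun y : ℝ => 3*(y-1)^2) (6*(x-1)) x := by
    have := (((hasDerivAt_id x).sub_const 1).pow 2).const_mul 3
    refine this.congr_deriv ?_
    simp only [id_eq]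
    ring
  have h3 : HasDerivAt (fun y : ℝ => 2*(y+2)) 2 x := by
    simpa using ((hasDerivAt_id x).add_const 2).const_mul 2
  have h4 := h2.div h3 hne
  have h5 := ((h1.sub (hasDerivAt_id x)).add_const 1).sub h4
  refine h5.congr_deriv ?_
  have hne2 : (2*(x+2))^2 ≠ 0 := pow_ne_zero 2 hne
  rw [eq_sub_iff_add_eq]
  have : (6*(x-1)*(2*(x+2)) - 3*(x-1)^2*2) / (2*(x+2))^2 = 3*(x-1)*(x+5)/(2*(x+2)^2) := by
    rw [div_eq_div_iff hne2 (by positivity)]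
    ring
  rw [this]
  ring

private lemma gfun_one : gfun 1 = 0 := by simp [gfun]

private lemma gfun_deriv_nonneg {x : ℝ} (hx : 1 ≤ x) :
    0 ≤ Real.log x - 3*(x-1)*(x+5)/(2*(x+2)^2) := by
  have hlog := log_ge_of_one_le hx
  have h1 : 3*(x-1)*(x+5)/(2*(x+2)^2) ≤ 2*(x-1)/(x+1) := by
    rw [div_le_div_iff₀ (by positivity) (by positivity)]
    nlinarith [sq_nonneg (x-1), sq_nonneg x]
  linarith

private lemma gfun_deriv_nonpos {x : ℝ} (hx0 : 0 < x) (hx : x ≤ 1) :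
    Real.log x - 3*(x-1)*(x+5)/(2*(x+2)^2) ≤ 0 := by
  have hlog := log_le_of_le_one hx0 hx
  have h1 : 2*(x-1)/(x+1) ≤ 3*(x-1)*(x+5)/(2*(x+2)^2) := by
    rw [div_le_div_iff₀ (by positivity) (by positivity)]
    nlinarith [sq_nonneg (x-1), sq_nonneg x]
  linarith

private lemma gfun_contOn {s : Set ℝ} (hs : ∀ x ∈ s, (0:ℝ) < x) : ContinuousOn gfun s := by
  apply ContinuousOn.sub
  · apply ContinuousOn.add
    · apply ContinuousOn.sub
      · exact ContinuousOn.mul continuousOn_id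
          (Real.continuousOn_log.mono (fun x hx => ne_of_gt (hs x hx)))
      · fun_prop
    · fun_prop
  · exact ContinuousOn.div (by fun_prop) (by fun_prop)
      (fun x hx => by have := hs x hx; positivity)

private lemma gfun_nonneg {x : ℝ} (hx : 0 < x) : 0 ≤ gfun x := by
  rcases le_or_gt 1 x with h | h
  · have hmono : MonotoneOn gfun (Set.Ici 1) := by
      apply monotoneOn_of_deriv_nonneg (convex_Ici 1) (gfun_contOn (fun y hy => by
        simp at hy; linarith))
      · rw [interior_Ici]
        exact fun y hy =>
          (gfun_hasDeriv y (by simp at hy; linarith)).differentiableAt.differentiableWithinAt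
      · intro y hy
        rw [interior_Ici] at hy
        rw [(gfun_hasDeriv y (by simp at hy; linarith)).deriv]
        exact gfun_deriv_nonneg (le_of_lt hy)
    have := hmono (Set.mem_Ici.mpr le_rfl) (Set.mem_Ici.mpr h) h
    rwa [gfun_one] at this
  · have hmono : AntitoneOn gfun (Set.Ioc 0 1) := by
      apply antitoneOn_of_deriv_nonpos (convex_Ioc 0 1) (gfun_contOn (fun y hy => hy.1))
      · rw [interior_Ioc]
        exact fun y hy => (gfun_hasDeriv y hy.1).differentiableAt.differentiableWithinAt
      · intro y hy
        rw [interior_Ioc] at hy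
        rw [(gfun_hasDeriv y hy.1).deriv]
        exact gfun_deriv_nonpos hy.1 (le_of_lt hy.2)
    have := hmono (Set.mem_Ioc.mpr ⟨hx, le_of_lt h⟩)
      (Set.mem_Ioc.mpr ⟨one_pos, le_rfl⟩) (le_of_lt h)
    rwa [gfun_one] at this

private lemma pointwise_kl {a b : ℝ} (ha : 0 ≤ a) (hb : 0 < b) :
    3*(a-b)^2/(2*(a+2*b)) ≤ a * Real.log (a/b) - a + b := by
  rcases eq_or_lt_of_le ha with h | h
  · rw [← h]
    have h1 : 3*((0:ℝ)-b)^2/(2*(0+2*b)) = 3*b/4 := by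
      field_simp
      ring
    rw [h1]
    simp
    linarith
  · have hx : 0 < a/b := div_pos h hb
    have hg := gfun_nonneg hx
    have hb' : b ≠ 0 := hb.ne'
    have hab : a + 2*b ≠ 0 := by positivity
    have key : b * gfun (a/b) = a * Real.log (a/b) - a + b - 3*(a-b)^2/(2*(a+2*b)) := by
      unfold gfun
      field_simp
    nlinarith [mul_nonneg hb.le hg]

private lemma pinsker (d : ℕ) (p q : Fin d → ℝ) (hp : ∀ j, 0 ≤ p j) (hpsum : ∑ j, p j = 1)
    (hq : ∀ j, 0 < q j) (hqsum : ∑ j, q j = 1) (δ : ℝ) (hδ : 0 ≤ δ)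
    (hKL : ∑ j, p j * Real.log (p j / q j) ≤ δ) :
    ∑ j, |p j - q j| ≤ Real.sqrt (2 * δ) := by
  set f : Fin d → ℝ := fun j => 3*(p j - q j)^2/(2*(p j + 2*q j)) with hf
  set g : Fin d → ℝ := fun j => 2*(p j + 2*q j)/3 with hg
  have hfnn : ∀ j, 0 ≤ f j := fun j =>
    div_nonneg (by positivity) (by have := hp j; have := hq j; linarith)
  have hgnn : ∀ j, 0 ≤ g j := fun j => by
    have := hp j; have := hq j
    apply div_nonneg <;> linarith
  have habs : ∀ j, |p j - q j| = Real.sqrt (f j) * Real.sqrt (g j) := by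
    intro j
    rw [← Real.sqrt_mul (hfnn j), ← Real.sqrt_sq_eq_abs]
    congr 1
    have h2 : p j + 2 * q j ≠ 0 := by have := hp j; have := hq j; positivity
    rw [hf, hg]
    field_simp
    rw [mul_div_assoc, div_self (by have := hp j; have := hq j; positivity), mul_one]
  have hgsum : ∑ j, g j = 2 := by
    rw [hg]
    rw [← Finset.sum_div, ← Finset.mul_sum, Finset.sum_add_distrib, ← Finset.mul_sum,
      hpsum, hqsum]
    norm_num
  have hfsum : ∑ j, f j ≤ δ := by
    have h1 : ∀ j ∈ Finset.univ, f j ≤ p j * Real.log (p j / q j) - p j + q j :=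
      fun j _ => pointwise_kl (hp j) (hq j)
    calc ∑ j, f j ≤ ∑ j, (p j * Real.log (p j / q j) - p j + q j) := Finset.sum_le_sum h1
    _ = (∑ j, p j * Real.log (p j / q j)) - (∑ j, p j) + (∑ j, q j) := by
        rw [Finset.sum_add_distrib, Finset.sum_sub_distrib]
    _ ≤ δ := by rw [hpsum, hqsum]; linarith
  calc ∑ j, |p j - q j| = ∑ j, Real.sqrt (f j) * Real.sqrt (g j) :=
        Finset.sum_congr rfl fun j _ => habs j
  _ ≤ Real.sqrt (∑ j, f j) * Real.sqrt (∑ j, g j) :=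
        Real.sum_sqrt_mul_sqrt_le _ hfnn hgnn
  _ ≤ Real.sqrt δ * Real.sqrt 2 := by
        rw [hgsum]
        exact mul_le_mul_of_nonneg_right (Real.sqrt_le_sqrt hfsum) (Real.sqrt_nonneg 2)
  _ = Real.sqrt (2 * δ) := by rw [← Real.sqrt_mul hδ, mul_comm]

/-! ### Matrix lemmas -/

private lemma exp_unitary_norm_le {n : ℕ} (M : Matrix (Fin n) (Fin n) ℂ)
    (hM : M.IsHermitian) (c : ℝ) :
    ‖NormedSpace.exp ((Complex.I * c) • M)‖ ≤ 1 := by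
  have hskew : (Complex.I * c) • M ∈ skewAdjoint (Matrix (Fin n) (Fin n) ℂ) := by
    rw [skewAdjoint.mem_iff]
    show ((Complex.I * c) • M)ᴴ = _
    rw [conjTranspose_smul, hM.eq, ← neg_smul]
    congr 1
    simp [Complex.ext_iff]
  have hu : NormedSpace.exp ((Complex.I * c) • M) ∈ unitary (Matrix (Fin n) (Fin n) ℂ) :=
    by
      letI : NormedAlgebra ℚ (Matrix (Fin n) (Fin n) ℂ) := NormedAlgebra.restrictScalars ℚ ℂ _
      exact exp_mem_unitary_of_mem_skewAdjoint hskew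
  rcases Nat.eq_zero_or_pos n with h | h
  · subst h
    have : NormedSpace.exp ((Complex.I * c) • M) = 0 := Subsingleton.elim _ _
    rw [this]; simp
  · haveI : Nonempty (Fin n) := ⟨⟨0, h⟩⟩
    rw [CStarRing.norm_of_mem_unitary hu]

private lemma exp_sub_exp_norm_le {n : ℕ} (A B : Matrix (Fin n) (Fin n) ℂ)
    (hA : ∀ s : ℝ, s ∈ Set.Icc (0:ℝ) 1 → ‖NormedSpace.exp (s • A)‖ ≤ 1)
    (hB : ∀ s : ℝ, s ∈ Set.Icc (0:ℝ) 1 → ‖NormedSpace.exp (s • B)‖ ≤ 1) :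
    ‖NormedSpace.exp A - NormedSpace.exp B‖ ≤ ‖A - B‖ := by
  set f : ℝ → Matrix (Fin n) (Fin n) ℂ := fun s => NormedSpace.exp (s • A) * NormedSpace.exp ((1 - s) • B)
    with hfdef
  set f' : ℝ → Matrix (Fin n) (Fin n) ℂ :=
    fun s => NormedSpace.exp (s • A) * (A - B) * NormedSpace.exp ((1 - s) • B) with hf'def
  have hderiv : ∀ s : ℝ, HasDerivAt f (f' s) s := by
    intro s
    have h1 : HasDerivAt (fun u : ℝ => NormedSpace.exp (u • A)) (NormedSpace.exp (s • A) * A) s :=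
      hasDerivAt_exp_smul_const A s
    have h2' : HasDerivAt (fun u : ℝ => NormedSpace.exp (u • B)) (B * NormedSpace.exp ((1-s) • B)) (1-s) :=
      hasDerivAt_exp_smul_const' B (1-s)
    have h3 : HasDerivAt (fun u : ℝ => (1:ℝ) - u) (-1) s := by
      simpa using (hasDerivAt_id s).const_sub 1
    have h2 : HasDerivAt (fun u : ℝ => NormedSpace.exp ((1 - u) • B))
        ((-1 : ℝ) • (B * NormedSpace.exp ((1-s) • B))) s := h2'.scomp s h3
    have := h1.mul h2
    refine this.congr_deriv ?_
    rw [hf'def]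
    simp only [neg_one_smul, mul_neg, smul_neg]
    noncomm_ring
  have hbound : ∀ s ∈ Set.Icc (0:ℝ) 1, ‖f' s‖ ≤ ‖A - B‖ := by
    intro s hs
    have h1 : ‖NormedSpace.exp (s • A) * (A - B) * NormedSpace.exp ((1 - s) • B)‖ ≤
        ‖NormedSpace.exp (s • A)‖ * ‖A - B‖ * ‖NormedSpace.exp ((1 - s) • B)‖ :=
      le_trans (norm_mul_le _ _) (by
        gcongr
        exact norm_mul_le _ _)
    have h2 := hA s hs
    have h3 := hB (1 - s) ⟨by linarith [hs.2], by linarith [hs.1]⟩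
    calc ‖f' s‖ ≤ ‖NormedSpace.exp (s • A)‖ * ‖A - B‖ * ‖NormedSpace.exp ((1 - s) • B)‖ := h1
    _ ≤ 1 * ‖A - B‖ * 1 := by
        set_option linter.unreachableTactic false in
        set_option linter.unusedTactic false in
        gcongr <;> positivity
    _ = ‖A - B‖ := by ring
  have hmvt := Convex.norm_image_sub_le_of_norm_hasDerivWithin_le
    (f := f) (f' := f') (s := Set.Icc (0:ℝ) 1) (C := ‖A - B‖)
    (fun x _ => (hderiv x).hasDerivWithinAt) hbound (convex_Icc 0 1)
    (Set.mem_Icc.mpr ⟨le_refl 0, zero_le_one⟩) (Set.mem_Icc.mpr ⟨zero_le_one, le_refl 1⟩)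
  have hf1 : f 1 = NormedSpace.exp A := by simp [hfdef]
  have hf0 : f 0 = NormedSpace.exp B := by simp [hfdef]
  rw [hf1, hf0] at hmvt
  simpa using hmvt

/-- Error bound for Hamiltonian simulation with an approximately prepared PREP oracle:
if `D_KL(p‖q) ≤ δ`, `H := α • ∑ j, p j • V j` and `H' := ∑ j, q j • V j` are Hermitian
with `V j` unitary, then `‖exp(itH) - exp(i(αt)H')‖ ≤ √(2δ)·α·t` in spectral norm. -/
theorem time_evolution_kl_bound {d n : ℕ}
    (p q : Fin d → ℝ)
    (hp : ∀ j, 0 ≤ p j) (hpsum : ∑ j, p j = 1)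
    (hq : ∀ j, 0 < q j) (hqsum : ∑ j, q j = 1)
    (δ : ℝ) (hδ : 0 ≤ δ)
    (hKL : ∑ j, p j * Real.log (p j / q j) ≤ δ)
    (V : Fin d → Matrix (Fin n) (Fin n) ℂ)
    (hV : ∀ j, V j ∈ Matrix.unitaryGroup (Fin n) ℂ)
    (α t : ℝ) (hα : 0 ≤ α) (ht : 0 ≤ t)
    (H H' : Matrix (Fin n) (Fin n) ℂ)
    (hHdef : H = α • ∑ j, (p j) • V j) (hH'def : H' = ∑ j, (q j) • V j)
    (hH : H.IsHermitian) (hH' : H'.IsHermitian) :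
    ‖NormedSpace.exp ((Complex.I * t) • H) - NormedSpace.exp ((Complex.I * (α * t)) • H')‖ ≤
      Real.sqrt (2 * δ) * α * t := by
  have hRHS : 0 ≤ Real.sqrt (2 * δ) * α * t := by positivity
  rcases Nat.eq_zero_or_pos n with hn | hn
  · subst hn
    have : NormedSpace.exp ((Complex.I * t) • H) = NormedSpace.exp ((Complex.I * (α * t)) • H') :=
      Subsingleton.elim _ _
    rw [this, sub_self, norm_zero]
    exact hRHS
  haveI : Nonempty (Fin n) := ⟨⟨0, hn⟩⟩
  set X : Matrix (Fin n) (Fin n) ℂ := (Complex.I * t) • H with hX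
  set Y : Matrix (Fin n) (Fin n) ℂ := (Complex.I * (α * t)) • H' with hY
  -- Step 1: mean value bound
  have step1 : ‖NormedSpace.exp X - NormedSpace.exp Y‖ ≤ ‖X - Y‖ := by
    apply exp_sub_exp_norm_le
    · intro s _
      have hsX : s • X = (Complex.I * ((s * t : ℝ) : ℂ)) • H := by
        rw [hX]
        ext i k
        simp [Matrix.smul_apply, Complex.real_smul]
        push_cast
        ring
      rw [hsX]
      exact exp_unitary_norm_le H hH (s * t)
    · intro s _
      have hsY : s • Y = (Complex.I * ((s * (α * t) : ℝ) : ℂ)) • H' := by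
        rw [hY]
        ext i k
        simp [Matrix.smul_apply, Complex.real_smul]
        push_cast
        ring
      rw [hsY]
      exact exp_unitary_norm_le H' hH' (s * (α * t))
  -- Step 2: compute X - Y
  have hXY : X - Y = (Complex.I * ((α * t : ℝ) : ℂ)) • ∑ j, ((p j - q j) • V j) := by
    rw [hX, hY, hHdef, hH'def]
    ext i k
    simp only [Matrix.sub_apply, Matrix.smul_apply, Matrix.sum_apply, Complex.real_smul,
      smul_eq_mul, Finset.mul_sum, ← Finset.sum_sub_distrib]
    refine Finset.sum_congr rfl fun j _ => ?_
    push_cast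
    ring
  -- Step 3: bound the norm of X - Y
  have step3 : ‖X - Y‖ ≤ (α * t) * ∑ j, |p j - q j| := by
    rw [hXY, norm_smul]
    have hnc : ‖Complex.I * ((α * t : ℝ) : ℂ)‖ = α * t := by
      rw [norm_mul, Complex.norm_I, one_mul, Complex.norm_real, Real.norm_eq_abs,
        abs_of_nonneg (by positivity)]
    rw [hnc]
    have hsum : ‖∑ j, ((p j - q j) • V j)‖ ≤ ∑ j, |p j - q j| := by
      refine le_trans (norm_sum_le _ _) (Finset.sum_le_sum fun j _ => ?_)
      rw [norm_smul, Real.norm_eq_abs]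
      have hVj : ‖V j‖ = 1 := CStarRing.norm_of_mem_unitary (hV j)
      rw [hVj, mul_one]
    exact mul_le_mul_of_nonneg_left hsum (by positivity)
  -- Step 4: Pinsker
  have step4 : ∑ j, |p j - q j| ≤ Real.sqrt (2 * δ) :=
    pinsker d p q hp hpsum hq hqsum δ hδ hKL
  calc ‖NormedSpace.exp X - NormedSpace.exp Y‖ ≤ ‖X - Y‖ := step1
  _ ≤ (α * t) * ∑ j, |p j - q j| := step3
  _ ≤ (α * t) * Real.sqrt (2 * δ) := mul_le_mul_of_nonneg_left step4 (by positivity)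
  _ = Real.sqrt (2 * δ) * α * t := by ring
end

section
/- Let p, q : Fin N → ℝ be probability vectors with q x > 0 for all x, let δ ≥ 0 satisfy ∑ x, p x * Real.log (p x / q x) ≤ δ, and let f : Fin N → ℝ. Then |∑ x, p x * f x − ∑ x, q x * f x| ≤ Real.sqrt (2·δ) * Real.sqrt (∑ x, (f x)²). -/
/-- Second-order bound for the logarithm: `y + y²/2 ≤ -log (1 - y)` for `0 ≤ y < 1`. -/
lemma aux_log_quad {y : ℝ} (h0 : 0 ≤ y) (h1 : y < 1) :
    y + y ^ 2 / 2 ≤ -Real.log (1 - y) := by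
  have h := Real.hasSum_pow_div_log_of_abs_lt_one (x := y) (by rwa [abs_of_nonneg h0])
  have hle := sum_le_hasSum (Finset.range 2) (fun n _ => by positivity) h
  have : ∑ n ∈ Finset.range 2, y ^ (n + 1) / (n + 1 : ℝ) = y + y ^ 2 / 2 := by
    norm_num [Finset.sum_range_succ]
  rw [this] at hle
  exact_mod_cast hle

/-- `(t - t⁻¹)/2 ≤ log t` for `0 < t ≤ 1` (from `sinh x ≤ x` for `x ≤ 0`). -/
lemma aux_log_sinh {t : ℝ} (h0 : 0 < t) (h1 : t ≤ 1) :
    (t - t⁻¹) / 2 ≤ Real.log t := by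
  have hs : Real.sinh (Real.log t) ≤ Real.log t :=
    Real.sinh_le_self_iff.2 (Real.log_nonpos h0.le h1)
  rwa [Real.sinh_log h0] at hs

/-- Pointwise quadratic lower bound for the KL integrand. -/
lemma aux_pointwise {a b : ℝ} (ha : 0 ≤ a) (hb : 0 < b) (ha1 : a ≤ 1) (hb1 : b ≤ 1) :
    (a - b) ^ 2 ≤ 2 * (a * Real.log (a / b) - a + b) := by
  rcases eq_or_lt_of_le ha with h0 | ha'
  · -- a = 0
    rw [← h0]
    nlinarith [hb, hb1]
  rcases le_or_gt a b with hab | hab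
  · -- a ≤ b : use the sinh bound with t = a / b ≤ 1
    have ht0 : 0 < a / b := div_pos ha' hb
    have ht1 : a / b ≤ 1 := (div_le_one hb).2 hab
    have hlog := aux_log_sinh ht0 ht1
    have hinv : (a / b)⁻¹ = b / a := by rw [inv_div]
    rw [hinv] at hlog
    -- multiply by a*b > 0 : a*b*log(a/b) ≥ (a² - b²)/2
    have hmul : (a ^ 2 - b ^ 2) / 2 ≤ a * b * Real.log (a / b) := by
      have := mul_le_mul_of_nonneg_left hlog (le_of_lt (mul_pos ha' hb))
      have he : a * b * ((a / b - b / a) / 2) = (a ^ 2 - b ^ 2) / 2 := by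
        field_simp
      linarith [he ▸ this]
    nlinarith [hmul, hb, hb1, sq_nonneg (a - b),
      mul_nonneg (sub_nonneg.2 hb1) (sq_nonneg (a - b))]
  · -- b < a : use the quadratic log bound with y = (a - b)/a
    have hy0 : 0 ≤ (a - b) / a := div_nonneg (by linarith) ha'.le
    have hy1 : (a - b) / a < 1 := (div_lt_one ha').2 (by linarith)
    have hq := aux_log_quad hy0 hy1
    have h1y : (1 : ℝ) - (a - b) / a = b / a := by
      field_simp
      ring
    rw [h1y] at hq
    have hneg : -Real.log (b / a) = Real.log (a / b) := by
      rw [← Real.log_inv, inv_div]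
    rw [hneg] at hq
    -- multiply by a² > 0
    have hmul : a * (a - b) + (a - b) ^ 2 / 2 ≤ a ^ 2 * Real.log (a / b) := by
      have := mul_le_mul_of_nonneg_left hq (sq_nonneg a)
      have he : a ^ 2 * ((a - b) / a + ((a - b) / a) ^ 2 / 2)
          = a * (a - b) + (a - b) ^ 2 / 2 := by
        field_simp
      linarith [he ▸ this]
    nlinarith [hmul, ha', ha1, sq_nonneg (a - b),
      mul_nonneg (sub_nonneg.2 ha1) (sq_nonneg (a - b))]

/-- Error bound for the Monte Carlo expectation value with a learned distribution:
if `p`, `q` are probability vectors with `q > 0` and `D_KL(p‖q) ≤ δ`, then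
`|E_p[f] - E_q[f]| ≤ √(2δ) · ‖f‖₂`. -/
theorem expectation_error_kl_bound {N : ℕ}
    (p q : Fin N → ℝ)
    (hp : ∀ x, 0 ≤ p x) (hpsum : ∑ x, p x = 1)
    (hq : ∀ x, 0 < q x) (hqsum : ∑ x, q x = 1)
    (δ : ℝ) (hδ : 0 ≤ δ)
    (hKL : ∑ x, p x * Real.log (p x / q x) ≤ δ)
    (f : Fin N → ℝ) :
    |∑ x, p x * f x - ∑ x, q x * f x| ≤
      Real.sqrt (2 * δ) * Real.sqrt (∑ x, (f x) ^ 2) := by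
  have hp1 : ∀ x, p x ≤ 1 := fun x => by
    have := Finset.single_le_sum (f := p) (fun i _ => hp i) (Finset.mem_univ x)
    linarith [hpsum ▸ this]
  have hq1 : ∀ x, q x ≤ 1 := fun x => by
    have := Finset.single_le_sum (f := q) (fun i _ => (hq i).le) (Finset.mem_univ x)
    linarith [hqsum ▸ this]
  -- key estimate: ∑ (p x - q x)² ≤ 2δ
  have hsum : ∑ x, (p x - q x) ^ 2 ≤ 2 * δ := by
    have h1 : ∑ x, (p x - q x) ^ 2
        ≤ ∑ x, 2 * (p x * Real.log (p x / q x) - p x + q x) :=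
      Finset.sum_le_sum fun x _ => aux_pointwise (hp x) (hq x) (hp1 x) (hq1 x)
    have h2 : ∑ x, 2 * (p x * Real.log (p x / q x) - p x + q x)
        = 2 * (∑ x, p x * Real.log (p x / q x)) - 2 * (∑ x, p x) + 2 * (∑ x, q x) := by
      simp only [mul_sub, mul_add, Finset.sum_add_distrib, Finset.sum_sub_distrib,
        ← Finset.mul_sum]
    rw [h2, hpsum, hqsum] at h1
    linarith
  -- rewrite the difference of expectations
  have hdiff : ∑ x, p x * f x - ∑ x, q x * f x = ∑ x, (p x - q x) * f x := by
    rw [← Finset.sum_sub_distrib]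
    exact Finset.sum_congr rfl fun x _ => by ring
  rw [hdiff]
  -- Cauchy–Schwarz
  have hcs := Finset.sum_mul_sq_le_sq_mul_sq Finset.univ (fun x => p x - q x) f
  have hf2 : (0 : ℝ) ≤ ∑ x, (f x) ^ 2 := Finset.sum_nonneg fun x _ => sq_nonneg _
  calc |∑ x, (p x - q x) * f x|
      = Real.sqrt ((∑ x, (p x - q x) * f x) ^ 2) := (Real.sqrt_sq_eq_abs _).symm
    _ ≤ Real.sqrt (2 * δ * ∑ x, (f x) ^ 2) := by
        apply Real.sqrt_le_sqrt
        calc (∑ x, (p x - q x) * f x) ^ 2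
            ≤ (∑ x, (p x - q x) ^ 2) * ∑ x, (f x) ^ 2 := hcs
          _ ≤ 2 * δ * ∑ x, (f x) ^ 2 := mul_le_mul_of_nonneg_right hsum hf2
    _ = Real.sqrt (2 * δ) * Real.sqrt (∑ x, (f x) ^ 2) := Real.sqrt_mul (by linarith) _
end

section
/- Let c : Fin d → ℂ, V : Fin d → Matrix (Fin N) (Fin N) ℂ, and u, v : Fin N → ℂ. Let SEL : Matrix (Fin N × Fin d) (Fin N × Fin d) ℂ be the block-diagonal matrix Matrix.blockDiagonal V, and define the vectors ψ, φ : Fin N × Fin d → ℂ by ψ (n, j) := c j * u n and φ (n, j) := c j * v n. Then star φ ⬝ᵥ (SEL *ᵥ ψ) = ∑ j, (Complex.normSq (c j) : ℂ) * (star v ⬝ᵥ (V j *ᵥ u)). In particular, if PREP′|0⟩ = ∑ j e^{iφ_j}√(q j)|j⟩ with amplitudes c j of squared modulus q j, then ⟨0|ₐ PREP′† · SEL · PREP′ |0⟩ₐ block-encodes ∑ j, q j • V j, independently of the phases of the c j. -/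
/-! `SEL` acts block by block, so `⟨φ| SEL |ψ⟩` splits over the ancilla index `j` into
`⟨c j • v| V j |c j • u⟩ = conj (c j) * c j * ⟨v| V j |u⟩`: the phase of `c j` cancels between
bra and ket. -/

open Matrix

namespace Matrix

variable {m o α : Type*} [Fintype m] [Fintype o] [DecidableEq o]

theorem dotProduct_blockDiagonal_mulVec [NonUnitalNonAssocSemiring α]
    (V : o → Matrix m m α) (x y : m × o → α) :
    x ⬝ᵥ (blockDiagonal V *ᵥ y) =
      ∑ j, (fun n => x (n, j)) ⬝ᵥ (V j *ᵥ fun n => y (n, j)) := by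
  simp only [dotProduct, mulVec, Fintype.sum_prod_type, blockDiagonal_apply]
  rw [Finset.sum_comm]
  simp [Finset.mul_sum]

theorem star_smul_dotProduct_mulVec_smul [CommSemiring α] [StarRing α]
    (A : Matrix m m α) (a : α) (u v : m → α) :
    star (a • v) ⬝ᵥ (A *ᵥ (a • u)) = star a * a * (star v ⬝ᵥ (A *ᵥ u)) := by
  rw [star_smul, mulVec_smul, smul_dotProduct, dotProduct_smul, smul_eq_mul, smul_eq_mul,
    mul_assoc]

end Matrix

/-- LCU block-encoding identity with the approximated PREP oracle: if
`SEL = blockDiagonal V`, `ψ (n, j) = c j * u n` and `φ (n, j) = c j * v n`, then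
`⟨φ| SEL |ψ⟩ = ∑ j, |c j|² · ⟨v| V j |u⟩`, independently of the phases of the `c j`. -/
theorem lcu_block_encoding_identity {d N : ℕ}
    (c : Fin d → ℂ) (V : Fin d → Matrix (Fin N) (Fin N) ℂ)
    (u v : Fin N → ℂ)
    (SEL : Matrix (Fin N × Fin d) (Fin N × Fin d) ℂ)
    (hSEL : SEL = Matrix.blockDiagonal V)
    (ψ φ : Fin N × Fin d → ℂ)
    (hψ : ∀ nj : Fin N × Fin d, ψ nj = c nj.2 * u nj.1)
    (hφ : ∀ nj : Fin N × Fin d, φ nj = c nj.2 * v nj.1) :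
    star φ ⬝ᵥ (SEL *ᵥ ψ) =
      ∑ j, (Complex.normSq (c j) : ℂ) * (star v ⬝ᵥ (V j *ᵥ u)) := by
  subst hSEL
  rw [dotProduct_blockDiagonal_mulVec]
  refine Finset.sum_congr rfl fun j _ => ?_
  have slice_ψ : (fun n => ψ (n, j)) = c j • u := funext fun n => hψ (n, j)
  have slice_φ : (fun n => star φ (n, j)) = star (c j • v) :=
    funext fun n => congrArg star (hφ (n, j))
  rw [slice_ψ, slice_φ, star_smul_dotProduct_mulVec_smul, Complex.normSq_eq_conj_mul_self,
    Complex.star_def]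
end

section
/- Let p : Fin N → ℝ with p x ≥ 0 for all x, let θ₀ ∈ ℝ, and let q : ℝ → Fin N → ℝ be such that for each x the map θ ↦ q θ x has derivative g x at θ₀ and q θ₀ x > 0. Set s₀ := ∑ x, Real.sqrt (p x * q θ₀ x) and assume −1 < s₀ < 1. Then the map θ ↦ Real.arccos (∑ x, Real.sqrt (p x * q θ x)) has derivative −(∑ x, Real.sqrt (p x / q θ₀ x) * g x) / (2 * Real.sqrt (1 − s₀²)) at θ₀. -/
/-- Gradient of the Fisher–Rao (Bhattacharyya-angle) loss of a Born machine: if each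
output probability `θ ↦ q θ x` has derivative `g x` at `θ₀` and `q θ₀ x > 0`, and
`s₀ := ∑ x, √(p x · q θ₀ x)` satisfies `-1 < s₀ < 1`, then
`θ ↦ arccos (∑ x, √(p x · q θ x))` has derivative
`-(∑ x, √(p x / q θ₀ x) * g x) / (2 √(1 - s₀²))` at `θ₀`. -/
theorem hasDerivAt_fisher_rao_loss {N : ℕ}
    (p : Fin N → ℝ) (hp : ∀ x, 0 ≤ p x)
    (θ₀ : ℝ) (q : ℝ → Fin N → ℝ) (g : Fin N → ℝ)
    (hderiv : ∀ x, HasDerivAt (fun θ => q θ x) (g x) θ₀)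
    (hpos : ∀ x, 0 < q θ₀ x)
    (s₀ : ℝ) (hs₀ : s₀ = ∑ x, Real.sqrt (p x * q θ₀ x))
    (hlb : -1 < s₀) (hub : s₀ < 1) :
    HasDerivAt (fun θ => Real.arccos (∑ x, Real.sqrt (p x * q θ x)))
      (-(∑ x, Real.sqrt (p x / q θ₀ x) * g x) / (2 * Real.sqrt (1 - s₀ ^ 2))) θ₀ := by
  have hterm : ∀ x : Fin N, HasDerivAt (fun θ => Real.sqrt (p x * q θ x))
      (Real.sqrt (p x / q θ₀ x) * g x / 2) θ₀ := by
    intro x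
    rcases eq_or_lt_of_le (hp x) with h0 | h0
    · have : (fun θ => Real.sqrt (p x * q θ x)) = fun _ => 0 := by
        funext θ; rw [← h0, zero_mul, Real.sqrt_zero]
      rw [this, ← h0]
      simpa using hasDerivAt_const θ₀ (0 : ℝ)
    · have h := ((hderiv x).const_mul (p x)).sqrt
        (ne_of_gt (mul_pos h0 (hpos x)))
      convert h using 1
      have hq := hpos x
      have hs : Real.sqrt (p x / q θ₀ x) = p x / Real.sqrt (p x * q θ₀ x) := by
        rw [eq_div_iff (ne_of_gt (Real.sqrt_pos.2 (mul_pos h0 hq)))]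
        rw [← Real.sqrt_mul (le_of_lt (div_pos h0 hq))]
        have : p x / q θ₀ x * (p x * q θ₀ x) = p x ^ 2 := by
          field_simp
        rw [this, Real.sqrt_sq (le_of_lt h0)]
      rw [hs, div_mul_eq_mul_div, div_div, mul_comm (Real.sqrt (p x * q θ₀ x)) 2]
  have hsum : HasDerivAt (fun θ => ∑ x, Real.sqrt (p x * q θ x))
      (∑ x, Real.sqrt (p x / q θ₀ x) * g x / 2) θ₀ :=
    HasDerivAt.fun_sum fun x _ => hterm x
  have hs₀' : (∑ x, Real.sqrt (p x * q θ₀ x)) = s₀ := hs₀.symm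
  have harccos := Real.hasDerivAt_arccos (x := s₀) (ne_of_gt hlb) (ne_of_lt hub)
  rw [← hs₀'] at harccos
  have := harccos.comp θ₀ hsum
  refine this.congr_deriv ?_
  rw [hs₀', ← Finset.sum_div]
  ring
end
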